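/- Conversely, if the relative velocity v points inside the collision cone, i.e., ⟨p,v⟩ < 0 and the distance from the origin to the line {p + tv} is less than r (with ‖p‖ > r), then h(p,v) = ⟨p,v⟩ + ‖v‖√(‖p‖²−r²) < 0. -/

import Mathlib

open scoped RealInnerProductSpace

/-! By Lagrange's identity `⟪p, v⟫² + (p × v)² = ‖p‖²‖v‖²`, the hypothesis `|p × v| < r‖v‖` gives
`‖v‖²(‖p‖² - r²) < ⟪p, v⟫²`; taking square roots, `‖v‖√(‖p‖² - r²) < |⟪p, v⟫| = -⟪p, v⟫`. -/

theorem EuclideanSpace.inner_sq_add_cross_sq (p v : EuclideanSpace ℝ (Fin 2)) :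
    ⟪p, v⟫ ^ 2 + (p 0 * v 1 - p 1 * v 0) ^ 2 = ‖p‖ ^ 2 * ‖v‖ ^ 2 := by
  simp only [PiLp.inner_apply, RCLike.inner_apply, conj_trivial,
    EuclideanSpace.real_norm_sq_eq, Fin.sum_univ_two]
  ring

theorem Real.add_mul_sqrt_neg_of_sq_mul_lt {a b x : ℝ} (ha : a < 0) (hb : 0 ≤ b)
    (h : b ^ 2 * x < a ^ 2) : a + b * √x < 0 := by
  have : √(b ^ 2 * x) < -a := (Real.sqrt_lt' (neg_pos.2 ha)).2 (by rwa [neg_sq])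
  rw [Real.sqrt_mul (sq_nonneg b), Real.sqrt_sq hb] at this
  linarith

theorem stmt_16_general (p v : EuclideanSpace ℝ (Fin 2))
    (r : ℝ)
    (hpv : ⟪p, v⟫ < 0)
    (hdist : |p 0 * v 1 - p 1 * v 0| / ‖v‖ < r) :
    ⟪p, v⟫ + ‖v‖ * Real.sqrt (‖p‖ ^ 2 - r ^ 2) < 0 := by
  have hv : 0 < ‖v‖ := norm_pos_iff.2 (by rintro rfl; simp at hpv)
  have hcross : (p 0 * v 1 - p 1 * v 0) ^ 2 < r ^ 2 * ‖v‖ ^ 2 := by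
    rw [← sq_abs, ← mul_pow]
    exact pow_lt_pow_left₀ ((div_lt_iff₀ hv).1 hdist) (abs_nonneg _) two_ne_zero
  refine Real.add_mul_sqrt_neg_of_sq_mul_lt hpv (norm_nonneg v) ?_
  linarith [EuclideanSpace.inner_sq_add_cross_sq p v]

theorem stmt_16 (p v : EuclideanSpace ℝ (Fin 2)) (hv : v ≠ 0)
    (r : ℝ) (hr : 0 < r) (hpr : r < ‖p‖)
    (hpv : ⟪p, v⟫ < 0)
    (hdist : |p 0 * v 1 - p 1 * v 0| / ‖v‖ < r) :
    ⟪p, v⟫ + ‖v‖ * Real.sqrt (‖p‖ ^ 2 - r ^ 2) < 0 :=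
  stmt_16_general p v r hpv hdist
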